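/- Let ρ be a density operator and D a positive semidefinite operator with D ≤ I on a finite-dimensional Hilbert space, and suppose tr(Dρ) ≥ 1 − ε for some ε ∈ [0,1]. Then the trace distance between ρ and the post-measurement operator √D ρ √D satisfies ‖ρ − √D ρ √D‖₁ ≤ 2√ε + ε (Tender/Gentle Measurement Lemma). -/

import Mathlib

/-!
Put `S = √D` and `X = ρ - SρS`. For the sign matrix `C` of `X` (so `C² = 1` and
`‖X‖₁ = re tr(CX)`), split `X = (1 - S)ρ + Sρ(1 - S)` and bound both pairings with `C` by the
Cauchy–Schwarz inequality for the semi-inner product `⟪x, y⟫ = tr(yρxᴴ)`. Each bound is at most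
`√tr((1 - S)²ρ)`, and `tr((1 - S)²ρ) ≤ tr((1 - D)ρ) ≤ ε` because `0 ≤ D ≤ 1` forces `D ≤ √D`.
-/

open Matrix
open scoped ComplexOrder

/-- The trace norm `‖X‖₁ = Σ_i |λ_i(X)|` of a Hermitian matrix
(junk value `0` off the Hermitian matrices). -/
noncomputable def traceNorm {n : Type*} [Fintype n] [DecidableEq n]
    (X : Matrix n n ℂ) : ℝ :=
  if h : X.IsHermitian then ∑ i, |h.eigenvalues i| else 0

/-- The positive semidefinite square root of a positive semidefinite matrix
(the definition of `Matrix.PosSemidef.sqrt` in the older Mathlib). -/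
noncomputable def Matrix.PosSemidef.sqrt {n 𝕜 : Type*} [Fintype n] [RCLike 𝕜] [DecidableEq n]
    {A : Matrix n n 𝕜} (hA : A.PosSemidef) : Matrix n n 𝕜 :=
  (hA.1.eigenvectorUnitary : Matrix n n 𝕜) *
    diagonal (fun i => ((√(hA.1.eigenvalues i) : ℝ) : 𝕜)) *
    (star hA.1.eigenvectorUnitary : Matrix n n 𝕜)

open scoped MatrixOrder

namespace Matrix

variable {n : Type*} [Fintype n]

lemma norm_trace_mul_mul_conjTranspose_le {ρ : Matrix n n ℂ} (hρ : ρ.PosSemidef)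
    (x y : Matrix n n ℂ) :
    ‖(y * ρ * xᴴ).trace‖ ≤ √(x * ρ * xᴴ).trace.re * √(y * ρ * yᴴ).trace.re := by
  let _ := ρ.toMatrixSeminormedAddCommGroup hρ
  let _ := ρ.toMatrixInnerProductSpace hρ
  calc ‖(y * ρ * xᴴ).trace‖ = ‖inner ℂ x y‖ := rfl
    _ ≤ ‖x‖ * ‖y‖ := norm_inner_le_norm x y
    _ = _ := by rw [norm_eq_sqrt_re_inner (𝕜 := ℂ) x, norm_eq_sqrt_re_inner (𝕜 := ℂ) y]; rfl

lemma PosSemidef.re_trace_mul_mul_conjTranspose_nonneg {ρ : Matrix n n ℂ} (hρ : ρ.PosSemidef)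
    (x : Matrix n n ℂ) : 0 ≤ (x * ρ * xᴴ).trace.re :=
  (RCLike.nonneg_iff.mp (hρ.mul_mul_conjTranspose_same x).trace_nonneg).1

variable [DecidableEq n]

lemma PosSemidef.re_trace_mul_nonneg {P ρ : Matrix n n ℂ} (hP : P.PosSemidef)
    (hρ : ρ.PosSemidef) : 0 ≤ (P * ρ).trace.re := by
  obtain ⟨B, rfl⟩ := CStarAlgebra.nonneg_iff_eq_star_mul_self.mp hP.nonneg
  rw [star_eq_conjTranspose, ← trace_mul_cycle]
  exact hρ.re_trace_mul_mul_conjTranspose_nonneg B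

lemma IsHermitian.trace_cfc {A : Matrix n n ℂ} (hA : A.IsHermitian) (f : ℝ → ℝ) :
    (cfc f A).trace = ∑ i, (f (hA.eigenvalues i) : ℂ) := by
  rw [hA.cfc_eq, IsHermitian.cfc, Unitary.conjStarAlgAut_apply, trace_mul_cycle,
    Unitary.coe_star_mul_self, one_mul, trace_diagonal]
  rfl

lemma IsHermitian.traceNorm_eq_re_trace_cfc_abs {X : Matrix n n ℂ} (hX : X.IsHermitian) :
    traceNorm X = (cfc (abs : ℝ → ℝ) X).trace.re := by
  simp only [traceNorm, dif_pos hX, hX.trace_cfc, Complex.re_sum, Complex.ofReal_re]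

lemma IsHermitian.exists_traceNorm_eq_re_trace_mul {X : Matrix n n ℂ} (hX : X.IsHermitian) :
    ∃ C : Matrix n n ℂ, C.IsHermitian ∧ C * C = 1 ∧ traceNorm X = (C * X).trace.re := by
  let sgn : ℝ → ℝ := fun x => if x < 0 then -1 else 1
  have hsgn : ContinuousOn sgn (spectrum ℝ X) := X.finite_real_spectrum.continuousOn sgn
  refine ⟨cfc sgn X, cfc_predicate sgn X, ?_, ?_⟩
  · rw [← cfc_mul sgn sgn X, ← cfc_one ℝ X]
    refine cfc_congr fun x _ => ?_
    simp only [sgn, Pi.one_apply]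
    split_ifs <;> norm_num
  · rw [hX.traceNorm_eq_re_trace_cfc_abs]
    have hCX : cfc sgn X * X = cfc (fun x => sgn x * x) X := by
      conv_lhs => enter [2]; rw [← cfc_id' ℝ X]
      exact (cfc_mul sgn (fun x => x) X).symm
    rw [hCX]
    congr 2
    refine cfc_congr fun x _ => ?_
    by_cases hx : x < 0
    · simp [sgn, hx, abs_of_neg hx]
    · simp [sgn, hx, abs_of_nonneg (not_lt.mp hx)]

lemma PosSemidef.sqrt_eq_cfc {A : Matrix n n ℂ} (hA : A.PosSemidef) :
    hA.sqrt = cfc Real.sqrt A := by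
  rw [hA.1.cfc_eq]
  rfl

lemma PosSemidef.isHermitian_sqrt {A : Matrix n n ℂ} (hA : A.PosSemidef) :
    hA.sqrt.IsHermitian :=
  hA.sqrt_eq_cfc ▸ cfc_predicate Real.sqrt A

lemma PosSemidef.sqrt_mul_self {A : Matrix n n ℂ} (hA : A.PosSemidef) :
    hA.sqrt * hA.sqrt = A := by
  rw [hA.sqrt_eq_cfc, ← cfc_mul Real.sqrt Real.sqrt A]
  conv_rhs => rw [← cfc_id ℝ A]
  exact cfc_congr fun x hx => Real.mul_self_sqrt (spectrum_nonneg_of_nonneg hA.nonneg hx)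

lemma PosSemidef.le_sqrt {A : Matrix n n ℂ} (hA : A.PosSemidef) (hA1 : A ≤ 1) :
    A ≤ hA.sqrt := by
  rw [hA.sqrt_eq_cfc]
  conv_lhs => rw [← cfc_id ℝ A]
  rw [cfc_le_iff id Real.sqrt A]
  intro x hx
  have h0 : 0 ≤ x := spectrum_nonneg_of_nonneg hA.nonneg hx
  have h1 : x ≤ 1 := (CFC.le_one_iff A).mp hA1 x hx
  exact Real.le_sqrt_of_sq_le (by simp only [id]; nlinarith)

lemma re_trace_one_sub_mul_one_sub_mul_le {ρ S : Matrix n n ℂ} (hρ : ρ.PosSemidef)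
    (hSS : S * S ≤ S) : ((1 - S) * (1 - S) * ρ).trace.re ≤ ((1 - S * S) * ρ).trace.re := by
  have e : (1 - S * S) * ρ = (1 - S) * (1 - S) * ρ + ((S - S * S) * ρ + (S - S * S) * ρ) := by
    noncomm_ring
  have := hSS.re_trace_mul_nonneg hρ
  rw [e, trace_add, trace_add, Complex.add_re, Complex.add_re]
  linarith

theorem traceNorm_sub_mul_mul_le {ρ S : Matrix n n ℂ} (hρ : ρ.PosSemidef) (hρ1 : ρ.trace = 1)
    (hS : S.IsHermitian) (hSS : S * S ≤ S) :
    traceNorm (ρ - S * ρ * S) ≤ 2 * √((1 - S * S) * ρ).trace.re := by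
  have hX : (ρ - S * ρ * S).IsHermitian := by
    simpa only [hS.eq] using hρ.1.sub (hρ.mul_mul_conjTranspose_same S).1
  obtain ⟨C, hC, hCC, hCX⟩ := hX.exists_traceNorm_eq_re_trace_mul
  have h1S : (1 - S)ᴴ = 1 - S := by rw [conjTranspose_sub, conjTranspose_one, hS.eq]
  have hsplit : (C * (ρ - S * ρ * S)).trace
      = ((1 - S) * ρ * Cᴴ).trace + (S * ρ * (C * (1 - S))ᴴ).trace := by
    rw [hC.eq, conjTranspose_mul, h1S, hC.eq, ← trace_add, trace_mul_comm C]
    congr 1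
    noncomm_ring
  have htrace_conj (x : Matrix n n ℂ) : (x * ρ * xᴴ).trace = (xᴴ * x * ρ).trace :=
    trace_mul_cycle _ _ _
  set q := ((1 - S) * (1 - S) * ρ).trace.re
  set t := ((1 - S * S) * ρ).trace.re
  have hq0 : 0 ≤ q := by
    have := hρ.re_trace_mul_mul_conjTranspose_nonneg (1 - S)
    rwa [htrace_conj, h1S] at this
  have htq : q ≤ t := re_trace_one_sub_mul_one_sub_mul_le hρ hSS
  have hterm₁ : ‖((1 - S) * ρ * Cᴴ).trace‖ ≤ √q := by
    refine (norm_trace_mul_mul_conjTranspose_le hρ C (1 - S)).trans_eq ?_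
    rw [htrace_conj C, htrace_conj (1 - S), hC.eq, hCC, h1S, one_mul, hρ1, Complex.one_re,
      Real.sqrt_one, one_mul]
  have hSS1 : (S * S * ρ).trace.re = 1 - t := by
    simp only [t, sub_mul, one_mul, trace_sub, hρ1, Complex.sub_re, Complex.one_re, sub_sub_cancel]
  have hterm₂ : ‖(S * ρ * (C * (1 - S))ᴴ).trace‖ ≤ √q * √(1 - t) := by
    refine (norm_trace_mul_mul_conjTranspose_le hρ (C * (1 - S)) S).trans_eq ?_
    rw [htrace_conj (C * (1 - S)), htrace_conj S, conjTranspose_mul, h1S, hC.eq, hS.eq, hSS1,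
      show (1 - S) * C * (C * (1 - S)) = (1 - S) * (1 - S) by
        rw [Matrix.mul_assoc, ← Matrix.mul_assoc C, hCC, Matrix.one_mul]]
  calc traceNorm (ρ - S * ρ * S)
      ≤ ‖((1 - S) * ρ * Cᴴ).trace‖ + ‖(S * ρ * (C * (1 - S))ᴴ).trace‖ := by
        rw [hCX, hsplit, Complex.add_re]
        exact add_le_add (Complex.re_le_norm _) (Complex.re_le_norm _)
    _ ≤ √q + √q * √(1 - t) := add_le_add hterm₁ hterm₂
    _ ≤ √t + √t * 1 := by
        gcongr
        exact Real.sqrt_le_one.mpr (by linarith)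
    _ = 2 * √t := by ring

end Matrix

theorem gentle_measurement_general {n : Type*} [Fintype n] [DecidableEq n]
    (ρ D : Matrix n n ℂ) (hρ : ρ.PosSemidef) (hρ1 : ρ.trace = 1)
    (hD : D.PosSemidef) (hDle : ((1 : Matrix n n ℂ) - D).PosSemidef)
    (ε : ℝ) (hε0 : 0 ≤ ε)
    (h : 1 - ε ≤ (Matrix.trace (D * ρ)).re) :
    traceNorm (ρ - hD.sqrt * ρ * hD.sqrt) ≤ 2 * Real.sqrt ε + ε := by
  have hSS : hD.sqrt * hD.sqrt = D := hD.sqrt_mul_self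
  have hSS_le : hD.sqrt * hD.sqrt ≤ hD.sqrt := by
    rw [hSS]
    exact hD.le_sqrt hDle
  have hεtr : ((1 - D) * ρ).trace.re ≤ ε := by
    rw [sub_mul, one_mul, trace_sub, hρ1, Complex.sub_re, Complex.one_re]
    linarith
  calc traceNorm (ρ - hD.sqrt * ρ * hD.sqrt)
      ≤ 2 * √((1 - hD.sqrt * hD.sqrt) * ρ).trace.re :=
        traceNorm_sub_mul_mul_le hρ hρ1 hD.isHermitian_sqrt hSS_le
    _ ≤ 2 * √ε := by rw [hSS]; gcongr
    _ ≤ 2 * √ε + ε := le_add_of_nonneg_right hε0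

/-- Tender/Gentle Measurement Lemma: if `tr(Dρ) ≥ 1 - ε` for a density operator `ρ`
and a measurement operator `0 ≤ D ≤ I`, then `‖ρ − √D ρ √D‖₁ ≤ 2√ε + ε`. -/
theorem gentle_measurement {n : Type*} [Fintype n] [DecidableEq n]
    (ρ D : Matrix n n ℂ) (hρ : ρ.PosSemidef) (hρ1 : ρ.trace = 1)
    (hD : D.PosSemidef) (hDle : ((1 : Matrix n n ℂ) - D).PosSemidef)
    (ε : ℝ) (hε0 : 0 ≤ ε) (hε1 : ε ≤ 1)
    (h : 1 - ε ≤ (Matrix.trace (D * ρ)).re) :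
    traceNorm (ρ - hD.sqrt * ρ * hD.sqrt) ≤ 2 * Real.sqrt ε + ε :=
  gentle_measurement_general ρ D hρ hρ1 hD hDle ε hε0 h
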